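/- arXiv:1511.07830 — 5 statements merged into one kernel-verified Lean document; each statement's English description precedes it below -/
import Mathlib

section
/- Let (C, J) be a small site such that the Grothendieck topos Sh(C,J) of Type-valued sheaves is locally connected. Then an object E of Sh(C,J) is connected if and only if the hom-functor Hom(E, −) : Sh(C,J) → Type preserves all small coproducts. -/
open CategoryTheory CategoryTheory.Limits Opposite

universe u

/-- An object `E` of a category with binary coproducts is *connected* if whenever
`E` is isomorphic to a coproduct `U ⨿ V`, exactly one of `U` and `V` is not an
initial object. -/
def IsConnectedObject {D : Type*} [Category D] [HasBinaryCoproducts D] (E : D) : Prop :=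
  ∀ (U V : D), (E ≅ U ⨿ V) →
    Xor' (¬ Nonempty (IsInitial U)) (¬ Nonempty (IsInitial V))

instance sheafType_hasBinaryCoproducts {C : Type u} [SmallCategory C]
    (J : GrothendieckTopology C) : HasBinaryCoproducts (Sheaf J (Type u)) :=
  Sheaf.instHasColimitsOfShape

/-!
Coproducts in a Grothendieck topos are van Kampen: disjoint and stable under pullback. This is
checked pointwise in `Type`, lifts to presheaves, and descends to sheaves along the left exact
sheafification. So a morphism `g : E ⟶ ∐ Xᵢ` exhibits `E` as the coproduct of the pullbacks
`Eᵢ = E ×_{∐ X} Xᵢ`. If `E` is connected, splitting off one non-initial `Eᵢ₀` from the others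
shows that every other `Eᵢ` is initial, hence `E ≅ Eᵢ₀` and `g` factors through `Xᵢ₀`; the
factorization is unique because coproduct injections are disjoint monomorphisms.
Conversely, if `Hom(E, -)` preserves the empty and binary coproducts, then `E` is not initial and
an isomorphism `E ≅ U ⨿ V`, as a morphism into `U ⨿ V`, factors through one summand, say `U`;
then `V ⟶ U ⨿ V` factors through `U ⟶ U ⨿ V`, so `V` is initial by disjointness.
-/

namespace CategoryTheory

namespace Limits

theorem Types.isVanKampenColimit_of_discrete {I : Type w} {F : Discrete I ⥤ Type v}
    {c : Cocone F} (hc : IsColimit c) : IsVanKampenColimit c := by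
  have discrete_eq (G : Discrete I ⥤ Type v) : ∃ X, G = Discrete.functor X :=
    ⟨G.obj ∘ Discrete.mk, Functor.hext (fun _ ↦ rfl) (by rintro ⟨i⟩ ⟨j⟩ ⟨⟨rfl : i = j⟩⟩; simp)⟩
  obtain ⟨X, rfl⟩ := discrete_eq F
  intro F' c' α f hα _
  obtain ⟨X', rfl⟩ := discrete_eq F'
  change Cofan X at c
  change Cofan X' at c'
  have comm (i : I) (x : X' i) : f (c'.inj i x) = c.inj i (α.app ⟨i⟩ x) :=
    (ConcreteCategory.congr_hom (NatTrans.congr_app hα ⟨i⟩) x).symm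
  have comm_eq {i j : I} {x : X' i} {y : X' j} (h : c'.inj i x = c'.inj j y) :
      c.inj i (α.app ⟨i⟩ x) = c.inj j (α.app ⟨j⟩ y) := by
    rw [← comm, ← comm, h]
  simp only [Discrete.forall, Types.isPullback_iff]
  constructor
  · rintro ⟨hc'⟩ i
    refine ⟨(NatTrans.congr_app hα ⟨i⟩).symm,
      fun x y ⟨hxy, _⟩ ↦ Cofan.inj_injective_of_isColimit hc' i hxy, fun x y hxy ↦ ?_⟩
    obtain ⟨k, z, rfl⟩ := Cofan.inj_jointly_surjective_of_isColimit hc' x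
    obtain ⟨rfl, rfl⟩ :=
      (Cofan.inj_apply_eq_iff_of_isColimit hc _ _).1 ((comm k z).symm.trans hxy)
    exact ⟨z, rfl, rfl⟩
  · intro H
    refine (Cofan.isColimit_cofanTypes_iff c').1 (CofanTypes.isColimit_mk _ ?_ ?_ ?_)
    · intro x
      obtain ⟨i, y, hy⟩ := Cofan.inj_jointly_surjective_of_isColimit hc (f x)
      obtain ⟨z, hz, -⟩ := (H i).2.2 x y hy.symm
      exact ⟨i, z, hz⟩
    · exact fun i y z hyz ↦
        (H i).2.1 y z ⟨hyz, Cofan.inj_injective_of_isColimit hc i (comm_eq hyz)⟩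
    · exact fun i j y z hyz ↦ Cofan.eq_of_inj_apply_eq_of_isColimit hc _ _ (comm_eq hyz)

end Limits

section Site

variable {C : Type u} [SmallCategory C] {I : Type u}

theorem Presheaf.isVanKampenColimit_of_discrete {F : Discrete I ⥤ Cᵒᵖ ⥤ Type u}
    {c : Cocone F} (hc : IsColimit c) : IsVanKampenColimit c :=
  isVanKampenColimit_of_evaluation F c fun X ↦
    Types.isVanKampenColimit_of_discrete (isColimitOfPreserves ((evaluation _ _).obj X) hc)

theorem Sheaf.isVanKampenColimit_of_discrete (J : GrothendieckTopology C)
    {F : Discrete I ⥤ Sheaf J (Type u)} {c : Cocone F} (hc : IsColimit c) :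
    IsVanKampenColimit c := by
  let adj := sheafificationAdjunction J (Type u)
  have hsheafified : IsVanKampenColimit
      ((presheafToSheaf J _).mapCocone (colimit.cocone (F ⋙ sheafToPresheaf J _))) :=
    (Presheaf.isVanKampenColimit_of_discrete (colimit.isColimit _)).map_reflective adj
  let e : F ≅ (F ⋙ sheafToPresheaf J _) ⋙ presheafToSheaf J _ :=
    F.rightUnitor.symm ≪≫ Functor.isoWhiskerLeft F (asIso adj.counit).symm ≪≫
      (Functor.associator _ _ _).symm
  have := hsheafified.precompose_isIso e.hom
  exact this.of_iso (this.isColimit.uniqueUpToIso hc)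

end Site

namespace Limits

variable {S : Type*} [Category S]

noncomputable def Cofan.IsColimit.isInitial {I : Type*} {X : I → S} {c : Cofan X}
    (hc : IsColimit c) (h : ∀ i, IsInitial (X i)) : IsInitial c.pt :=
  IsInitial.ofUniqueHom (fun Y ↦ Cofan.IsColimit.desc hc fun i ↦ (h i).to Y)
    fun _ _ ↦ Cofan.IsColimit.hom_ext hc _ _ fun i ↦ (h i).hom_ext _ _

theorem Cofan.IsColimit.isIso_inj_of_forall_ne_isInitial {I : Type*} {X : I → S}
    {c : Cofan X} (hc : IsColimit c) (i₀ : I) (h : ∀ i ≠ i₀, Nonempty (IsInitial (X i))) :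
    IsIso (c.inj i₀) := by
  classical
  let r : c.pt ⟶ X i₀ := Cofan.IsColimit.desc hc fun i ↦
    if hi : i = i₀ then eqToHom (congrArg X hi) else (h i hi).some.to _
  refine ⟨r, by simp [r], Cofan.IsColimit.hom_ext hc _ _ fun i ↦ ?_⟩
  by_cases hi : i = i₀
  · subst hi
    simp [r]
  · exact (h i hi).some.hom_ext _ _

noncomputable def Cofan.IsColimit.isoCoprodSubtype {I : Type w} [HasCoproducts.{w} S]
    [HasBinaryCoproducts S] {X : I → S} {c : Cofan X} (hc : IsColimit c) (p : I → Prop)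
    [DecidablePred p] :
    c.pt ≅ (∐ fun i : {i // p i} ↦ X i) ⨿ (∐ fun i : {i // ¬ p i} ↦ X i) :=
  let e := Equiv.sumCompl p
  let hc' : IsColimit (Cofan.mk c.pt fun k ↦ c.inj (e k) : Cofan (X ∘ e)) :=
    hc.whiskerEquivalence (Discrete.equivalence e)
  (MonoCoprod.isColimitBinaryCofanSum _ _ _ hc' (colimit.isColimit _)
    (colimit.isColimit _)).coconePointUniqueUpToIso (colimit.isColimit _)

theorem nonempty_isInitial_of_comp_inl_eq_comp_inr [FinitaryExtensive S] {W U V : S}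
    {a : W ⟶ U} {b : W ⟶ V} (h : a ≫ coprod.inl = b ≫ coprod.inr) : Nonempty (IsInitial W) :=
  ⟨.ofStrict
    ((FinitaryExtensive.isPullback_initial_to_binaryCofan (coprodIsCoprod U V)).lift a b h)
    initialIsInitial⟩

end Limits

end CategoryTheory

section ConnectedObject

variable {S : Type*} [Category S]

theorem isConnectedObject_of_preservesColimitsOfShape [FinitaryExtensive S] (E : S)
    [PreservesColimitsOfShape (Discrete PEmpty.{1}) (coyoneda.obj (op E))]
    [PreservesColimitsOfShape (Discrete WalkingPair) (coyoneda.obj (op E))] :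
    IsConnectedObject E := by
  intro U V e
  have hE : ¬ Nonempty (IsInitial E) := fun ⟨h⟩ ↦
    ((Types.initial_iff_empty _).1 ⟨initialIsInitial.isInitialObj (coyoneda.obj (op E)) _⟩).false
      (h.to _)
  obtain ⟨⟨_ | _⟩, y, hy⟩ := Types.jointly_surjective_of_isColimit
    (isColimitOfPreserves (coyoneda.obj (op E)) (coprodIsCoprod U V)) e.hom
  · change E ⟶ U at y
    replace hy : y ≫ coprod.inl = e.hom := hy
    refine .inl ⟨fun ⟨hU⟩ ↦ hE ⟨.ofStrict y hU⟩, not_not.2 ?_⟩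
    exact nonempty_isInitial_of_comp_inl_eq_comp_inr (a := coprod.inr ≫ e.inv ≫ y) (b := 𝟙 V)
      (by simp [hy])
  · change E ⟶ V at y
    replace hy : y ≫ coprod.inr = e.hom := hy
    refine .inr ⟨fun ⟨hV⟩ ↦ hE ⟨.ofStrict y hV⟩, not_not.2 ?_⟩
    exact nonempty_isInitial_of_comp_inl_eq_comp_inr (a := 𝟙 U) (b := coprod.inl ≫ e.inv ≫ y)
      (by simp [hy])

variable [HasBinaryCoproducts S] [HasInitial S]

theorem IsConnectedObject.not_nonempty_isInitial {E : S} (hE : IsConnectedObject E) :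
    ¬ Nonempty (IsInitial E) :=
  (hE _ _ (coprod.rightUnitor E).symm).elim And.left
    fun h ↦ absurd ⟨initialIsInitial⟩ h.1

variable [HasStrictInitialObjects S] {I : Type w} [HasCoproducts.{w} S]

theorem IsConnectedObject.exists_forall_ne_isInitial {X : I → S} {c : Cofan X}
    (hc : IsColimit c) (hE : IsConnectedObject c.pt) :
    ∃ i₀, ∀ i ≠ i₀, Nonempty (IsInitial (X i)) := by
  classical
  obtain ⟨i₀, hi₀⟩ : ∃ i₀, ¬ Nonempty (IsInitial (X i₀)) := by
    by_contra! h
    exact hE.not_nonempty_isInitial ⟨Cofan.IsColimit.isInitial hc fun i ↦ (h i).some⟩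
  refine ⟨i₀, fun i hi ↦ ?_⟩
  rcases hE _ _ (Cofan.IsColimit.isoCoprodSubtype hc (· = i₀)) with ⟨-, hrest⟩ | ⟨-, hsingle⟩
  · exact ⟨.ofStrict (Sigma.ι (fun j : {j // ¬ j = i₀} ↦ X j) ⟨i, hi⟩) (not_not.1 hrest).some⟩
  · exact absurd
      ⟨.ofStrict (Sigma.ι (fun j : {j // j = i₀} ↦ X j) ⟨i₀, rfl⟩) (not_not.1 hsingle).some⟩ hi₀

variable [HasPullbacks S]

theorem IsConnectedObject.exists_comp_inj_eq {E : S} (hE : IsConnectedObject E) {X : I → S}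
    {c : Cofan X} (hc : IsUniversalColimit c) (g : E ⟶ c.pt) :
    ∃ i, ∃ y : E ⟶ X i, y ≫ c.inj i = g := by
  let c' : Cofan fun i ↦ pullback g (c.inj i) := Cofan.mk E fun i ↦ pullback.fst _ _
  obtain ⟨hc'⟩ := hc c' (Discrete.natTrans fun i ↦ pullback.snd _ _) g
    (by ext; exact pullback.condition.symm) (.of_discrete _)
    fun i ↦ IsPullback.of_hasPullback _ _
  obtain ⟨i, hi⟩ := hE.exists_forall_ne_isInitial hc'
  have : IsIso (pullback.fst g (c.inj i)) :=
    Cofan.IsColimit.isIso_inj_of_forall_ne_isInitial hc' i hi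
  exact ⟨i, inv (pullback.fst g (c.inj i)) ≫ pullback.snd _ _, by simp [← pullback.condition]⟩

theorem IsConnectedObject.isColimit_mapCocone_coyoneda {E : S} (hE : IsConnectedObject E)
    {X : I → S} {c : Cofan X} (hc : IsVanKampenColimit c) :
    Nonempty (IsColimit ((coyoneda.obj (op E)).mapCocone c)) := by
  refine ⟨(isColimitMapCoconeCofanMkEquiv _ _ c.inj).symm ((Cofan.isColimit_cofanTypes_iff _).1
    (CofanTypes.isColimit_mk _ ?_ ?_ ?_)).some⟩
  · exact hE.exists_comp_inj_eq hc.isUniversal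
  · intro i y z hyz
    have : Mono (c.inj i) := mono_of_cofan_isVanKampen hc ⟨i⟩
    exact (cancel_mono (c.inj i)).1 hyz
  · intro i j y z hyz
    by_contra hij
    have := isPullback_initial_to_of_cofan_isVanKampen hc ⟨i⟩ ⟨j⟩ (by simpa)
    exact hE.not_nonempty_isInitial ⟨.ofStrict (this.lift y z hyz) initialIsInitial⟩

end ConnectedObject

theorem connected_iff_hom_preserves_coproducts_general
    {C : Type u} [SmallCategory C] (J : GrothendieckTopology C)
    (E : Sheaf J (Type u)) :
    IsConnectedObject E ↔
      ∀ I : Type u, PreservesColimitsOfShape (Discrete I) (coyoneda.obj (op E)) := by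
  have : HasColimits (Sheaf J (Type u)) := Sheaf.instHasColimitsOfSize
  constructor
  · intro hE I
    have (X : I → Sheaf J (Type u)) :
        PreservesColimit (Discrete.functor X) (coyoneda.obj (op E)) :=
      preservesColimit_of_preserves_colimit_cocone (coproductIsCoproduct X)
        (hE.isColimit_mapCocone_coyoneda
          (Sheaf.isVanKampenColimit_of_discrete J (coproductIsCoproduct X))).some
    exact preservesColimitsOfShape_of_discrete _
  · intro h
    have := preservesColimitsOfShape_of_equiv
      (Discrete.equivalence (Equiv.equivOfIsEmpty PEmpty.{u + 1} PEmpty.{1})) (coyoneda.obj (op E))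
    have := preservesColimitsOfShape_of_equiv
      (Discrete.equivalence (Equiv.ulift (α := WalkingPair))) (coyoneda.obj (op E))
    exact isConnectedObject_of_preservesColimitsOfShape E

/-- For a locally connected Grothendieck topos `Sh(C,J)` (i.e. the constant sheaf
functor `Δ : Type → Sh(C,J)` admits a left adjoint `Π₀`), an object `E` is connected
if and only if `Hom(E, −)` preserves all small coproducts. -/
theorem connected_iff_hom_preserves_coproducts
    {C : Type u} [SmallCategory C] (J : GrothendieckTopology C)
    (Pi0 : Sheaf J (Type u) ⥤ Type u) (adj : Pi0 ⊣ constantSheaf J (Type u))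
    (E : Sheaf J (Type u)) :
    IsConnectedObject E ↔
      ∀ I : Type u, PreservesColimitsOfShape (Discrete I) (coyoneda.obj (op E)) :=
  connected_iff_hom_preserves_coproducts_general J E
end

section
/- Let A be a commutative group. The full subcategory of the functor category Fun(SingleObj A, SingleObj A) spanned by those functors which are equivalences of categories is equivalent to the product category Discrete(MulAut A) × SingleObj A. (This is the decomposition Aut(K(A,n)) ≃ Aut(A) × K(A,n) of the space of self-homotopy-equivalences of an Eilenberg–MacLane space, in the case n = 1.) -/
/-!
A functor `SingleObj M ⥤ SingleObj N` is the same as a monoid homomorphism `f : M →* N`, and it is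
an equivalence exactly when `f` is bijective. A natural transformation `f.toFunctor ⟶ g.toFunctor`
is an element `u` with `u * f a = g a * u` for all `a`; when `N` is commutative and cancellative
this forces `f = g` and leaves `u` arbitrary. So the self-equivalences of `SingleObj A` form a
groupoid whose objects are the automorphisms of `A`, each with automorphism group `A`.
-/

open CategoryTheory

universe u

namespace CategoryTheory.SingleObj

variable {M N : Type*} [Monoid M]

theorem natTrans_app_mul [Monoid N] {f g : M →* N} (α : f.toFunctor ⟶ g.toFunctor) (a : M) :
    α.app (star M) * f a = g a * α.app (star M) :=
  α.naturality (X := star M) (Y := star M) a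

theorem eq_of_natTrans [CancelCommMonoid N] {f g : M →* N} (α : f.toFunctor ⟶ g.toFunctor) :
    f = g :=
  MonoidHom.ext fun a => mul_left_cancel ((natTrans_app_mul α a).trans (mul_comm _ _))

noncomputable def mulEquivOfIsEquivalence [Monoid N] (F : SingleObj M ⥤ SingleObj N)
    [F.IsEquivalence] : M ≃* N :=
  MulEquiv.ofBijective ((mapHom M N).symm F)
    ⟨fun _ _ h => F.map_injective h, fun b => F.map_surjective b⟩

theorem toFunctor_mulEquivOfIsEquivalence [Monoid N] (F : SingleObj M ⥤ SingleObj N)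
    [F.IsEquivalence] : (mulEquivOfIsEquivalence F).toMonoidHom.toFunctor = F :=
  (mapHom M N).apply_symm_apply F

variable (M N) [CancelCommMonoid N]

def mulEquivProdFunctor : Discrete (M ≃* N) × SingleObj N ⥤ (SingleObj M ⥤ SingleObj N) where
  obj p := p.1.as.toMonoidHom.toFunctor
  map {p q} f := natTrans (f.2 : N) fun a => by
    change (f.2 : N) * p.1.as a = q.1.as a * f.2
    rw [Discrete.eq_of_hom f.1, mul_comm]

instance : (mulEquivProdFunctor M N).Faithful where
  map_injective h :=
    Prod.ext (Subsingleton.elim _ _) (congrArg (fun α => α.app (star M)) h)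

instance : (mulEquivProdFunctor M N).Full where
  map_surjective {p q} α := by
    have h : p.1.as = q.1.as := MulEquiv.toMonoidHom_injective (eq_of_natTrans α)
    exact ⟨(eqToHom (Discrete.ext h), α.app (star M)), rfl⟩

abbrev mulEquivProdSelfEquivalences :
    Discrete (M ≃* N) × SingleObj N ⥤
      ObjectProperty.FullSubcategory (fun F : SingleObj M ⥤ SingleObj N => F.IsEquivalence) :=
  ObjectProperty.lift _ (mulEquivProdFunctor M N) fun p =>
    inferInstanceAs p.1.as.toSingleObjEquiv.functor.IsEquivalence

instance : (mulEquivProdSelfEquivalences M N).EssSurj where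
  mem_essImage := fun ⟨F, _⟩ =>
    ⟨(⟨mulEquivOfIsEquivalence F⟩, star N),
      ⟨ObjectProperty.isoMk _ (eqToIso (toFunctor_mulEquivOfIsEquivalence F))⟩⟩

instance : (mulEquivProdSelfEquivalences M N).IsEquivalence where

end CategoryTheory.SingleObj

/-- For a commutative group `A`, the full subcategory of the functor category
`Fun(SingleObj A, SingleObj A)` spanned by the functors that are equivalences of
categories is equivalent to `Discrete (MulAut A) × SingleObj A`.  This is the
decomposition `Aut(K(A,n)) ≃ Aut(A) × K(A,n)` in the case `n = 1`. -/
theorem selfEquivalences_singleObj (A : Type u) [CommGroup A] :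
    Nonempty
      (ObjectProperty.FullSubcategory (fun F : SingleObj A ⥤ SingleObj A => F.IsEquivalence) ≌
        Discrete (MulAut A) × SingleObj A) :=
  ⟨(SingleObj.mulEquivProdSelfEquivalences A A).asEquivalence.symm⟩
end

section
/- Let G be a group, A a commutative group, and ρ : G →* MulAut A a group homomorphism, with induced functor Bρ : SingleObj G ⥤ SingleObj (MulAut A). Then the functors F : SingleObj G ⥤ ActionCategory (MulAut A) A satisfying F ⋙ π = Bρ, where π : ActionCategory (MulAut A) A ⥤ SingleObj (MulAut A) is the canonical projection, are in bijection with the set of fixed points {a ∈ A | ∀ g ∈ G, ρ(g)(a) = a}. (This realizes the identification of degree-0 cohomology with coefficients in the local system ρ with lifts through the universal fibration θ₀ : Aut(A) ⋉ A → K(Aut(A),1), for the classifying space of G.) -/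
/-!
A functor `SingleObj G ⥤ ActionCategory M X` is a point `x : X` (the image of the unique object)
together with a monoid map from `G` into the stabilizer of `x`. Lying over `Bφ` pins that map
down to `φ`, so the only remaining datum is `x`, and `φ` lands in its stabilizer exactly when
`x` is fixed by every `φ g`.
-/

open CategoryTheory

namespace CategoryTheory.ActionCategory

variable {G M X : Type*} [Monoid G] [Monoid M] [MulAction M X] (φ : G →* M)

def liftOfFixed (x : X) (hx : ∀ g, φ g • x = x) : SingleObj G ⥤ ActionCategory M X where
  obj _ := (x : ActionCategory M X)
  map g := ⟨φ g, hx g⟩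
  map_id _ := Subtype.ext φ.map_one
  map_comp f g := Subtype.ext (φ.map_mul g f)

@[simp]
theorem eqToHom_val {p q : ActionCategory M X} (h : p = q) : (eqToHom h).val = 1 := by
  subst h
  rfl

theorem liftOfFixed_comp_π (x : X) (hx : ∀ g, φ g • x = x) :
    liftOfFixed φ x hx ⋙ π M X = φ.toFunctor :=
  rfl

variable {φ} {F : SingleObj G ⥤ ActionCategory M X}

theorem map_val_of_comp_π_eq (hF : F ⋙ π M X = φ.toFunctor) (g : G) :
    (F.map (X := SingleObj.star G) (Y := SingleObj.star G) g).val = φ g := by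
  have h := Functor.congr_hom hF (X := SingleObj.star G) (Y := SingleObj.star G) g
  simp only [Functor.comp_map, π_map, eqToHom_refl, Category.comp_id, Category.id_comp] at h
  exact h

theorem smul_back_obj_of_comp_π_eq (hF : F ⋙ π M X = φ.toFunctor) (g : G) :
    φ g • (F.obj (SingleObj.star G)).back = (F.obj (SingleObj.star G)).back := by
  rw [← map_val_of_comp_π_eq hF g]
  exact (F.map (X := SingleObj.star G) (Y := SingleObj.star G) g).property

theorem eq_liftOfFixed_of_comp_π_eq (hF : F ⋙ π M X = φ.toFunctor) :
    F = liftOfFixed φ _ (smul_back_obj_of_comp_π_eq hF) := by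
  refine Functor.ext (fun _ => (back_coe _).symm) (fun _ _ g => Subtype.ext ?_)
  simp only [ActionCategory.comp_val, eqToHom_val, one_mul]
  erw [eqToHom_val, mul_one]
  exact map_val_of_comp_π_eq hF g

variable (φ)

def liftsEquivFixedPoints :
    {F : SingleObj G ⥤ ActionCategory M X // F ⋙ π M X = φ.toFunctor} ≃
      {x : X // ∀ g, φ g • x = x} where
  toFun F := ⟨(F.1.obj (SingleObj.star G)).back, smul_back_obj_of_comp_π_eq F.2⟩
  invFun x := ⟨liftOfFixed φ x.1 x.2, liftOfFixed_comp_π φ x.1 x.2⟩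
  left_inv F := Subtype.ext (eq_liftOfFixed_of_comp_π_eq F.2).symm
  right_inv _ := rfl

end CategoryTheory.ActionCategory

/-- Let `G` be a group, `A` a commutative group and `ρ : G →* MulAut A` a group
homomorphism, with induced functor `Bρ : SingleObj G ⥤ SingleObj (MulAut A)`.
The functors `F : SingleObj G ⥤ ActionCategory (MulAut A) A` with
`F ⋙ π = Bρ` (where `π` is the canonical projection of the action groupoid)
are in bijection with the fixed points `{a ∈ A | ∀ g, ρ(g)(a) = a}`.  This
identifies degree-0 cohomology of `BG` with coefficients in the local system `ρ`
with lifts through the universal fibration `θ₀ : Aut(A) ⋉ A → K(Aut(A),1)`. -/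
theorem lifts_equiv_fixedPoints (G A : Type u) [Group G] [CommGroup A]
    (ρ : G →* MulAut A) :
    Nonempty
      ({F : SingleObj G ⥤ ActionCategory (MulAut A) A //
          F ⋙ ActionCategory.π (MulAut A) A = ρ.toFunctor} ≃
        {a : A // ∀ g : G, ρ g a = a}) :=
  ⟨ActionCategory.liftsEquivFixedPoints ρ⟩
end

section
/- Let G be a group, A a commutative group, and φ : G →* MulAut A a group homomorphism, and form the semidirect product A ⋊[φ] G with projection rightHom : A ⋊[φ] G →* G and inclusion inl : A →* A ⋊[φ] G. Call two group-homomorphism sections s, s' : G →* A ⋊[φ] G of rightHom A-conjugate if there exists a ∈ A with s'(g) = (inl a) · s(g) · (inl a)⁻¹ for all g ∈ G. Then the set of A-conjugacy classes of group-homomorphism sections of rightHom is in bijection with the first group cohomology group H¹(G, A), where G acts on A via φ. (This realizes the identification of degree-1 cohomology with coefficients in the local system φ with homotopy classes of lifts to B(Aut(A) ⋉ A), for the classifying space of G.) -/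
universe u

variable {A G : Type u}

/-- A function `f : G → A` is a 1-cocycle for the `G`-action on `A` given by
`φ : G →* MulAut A` if `f (g₁ * g₂) = f g₁ * φ g₁ (f g₂)`. -/
def IsOneCocycle [CommGroup A] [Group G] (φ : G →* MulAut A) (f : G → A) : Prop :=
  ∀ g₁ g₂ : G, f (g₁ * g₂) = f g₁ * φ g₁ (f g₂)

/-- Two 1-cocycles are cohomologous if they differ by a 1-coboundary
`g ↦ a * (φ g a)⁻¹`.  The quotient of the 1-cocycles by this relation is the
first group cohomology `H¹(G, A)` with `G` acting on `A` via `φ`. -/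
def CohomologousRel [CommGroup A] [Group G] (φ : G →* MulAut A)
    (f f' : {f : G → A // IsOneCocycle φ f}) : Prop :=
  ∃ a : A, ∀ g : G, f'.1 g = f.1 g * (a * (φ g a)⁻¹)

/-- Two group-homomorphism sections `s, s'` of `rightHom : A ⋊[φ] G →* G` are
`A`-conjugate if there is `a : A` with `s' g = inl a * s g * (inl a)⁻¹` for all `g`. -/
def AConjugateRel [CommGroup A] [Group G] (φ : G →* MulAut A)
    (s s' : {s : G →* A ⋊[φ] G //
      (SemidirectProduct.rightHom : A ⋊[φ] G →* G).comp s = MonoidHom.id G}) : Prop :=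
  ∃ a : A, ∀ g : G,
    s'.1 g = SemidirectProduct.inl a * s.1 g * (SemidirectProduct.inl a)⁻¹

namespace SectionsH1Aux

variable [CommGroup A] [Group G] (φ : G →* MulAut A)

abbrev Sections := {s : G →* A ⋊[φ] G //
  (SemidirectProduct.rightHom : A ⋊[φ] G →* G).comp s = MonoidHom.id G}

lemma sec_right (s : Sections φ) (g : G) : (s.1 g).right = g := by
  have := congrArg (fun h => h g) s.2
  simpa using this

/-- section to cocycle -/
def toCocycle (s : Sections φ) : {f : G → A // IsOneCocycle φ f} :=
  ⟨fun g => (s.1 g).left, by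
    intro g₁ g₂
    have := congrArg SemidirectProduct.left (s.1.map_mul g₁ g₂)
    simpa [SemidirectProduct.mul_left, sec_right φ s g₁] using this⟩

/-- cocycle to section -/
def toSection (f : {f : G → A // IsOneCocycle φ f}) : Sections φ := by
  refine ⟨{ toFun := fun g => ⟨f.1 g, g⟩
            map_one' := ?_
            map_mul' := ?_ }, ?_⟩
  · have h1 : f.1 1 = 1 := by
      have := f.2 1 1
      simpa using this.symm
    ext <;> simp [h1]
  · intro g₁ g₂
    ext <;> simp [SemidirectProduct.mul_left, SemidirectProduct.mul_right, f.2 g₁ g₂]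
  · ext g
    simp [SemidirectProduct.rightHom]

def secEquiv : Sections φ ≃ {f : G → A // IsOneCocycle φ f} where
  toFun := toCocycle φ
  invFun := toSection φ
  left_inv s := by
    apply Subtype.ext
    ext g
    · rfl
    · simp [toSection, toCocycle, sec_right φ s g]
  right_inv f := by
    apply Subtype.ext
    funext g
    rfl

lemma conj_eq (a : A) (x : A ⋊[φ] G) :
    SemidirectProduct.inl a * x * (SemidirectProduct.inl a)⁻¹ =
      ⟨a * x.left * (φ x.right a)⁻¹, x.right⟩ := by
  ext <;>
    simp [SemidirectProduct.mul_left, SemidirectProduct.mul_right]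

end SectionsH1Aux

/-- The set of `A`-conjugacy classes of group-homomorphism sections of
`rightHom : A ⋊[φ] G →* G` is in bijection with the first group cohomology
`H¹(G, A)`, where `G` acts on `A` via `φ`. -/
theorem sections_mod_conj_equiv_H1 [CommGroup A] [Group G] (φ : G →* MulAut A) :
    Nonempty (Quot (AConjugateRel φ) ≃ Quot (CohomologousRel φ)) := by
  refine ⟨Quot.congr (SectionsH1Aux.secEquiv φ) ?_⟩
  intro s s'
  constructor
  · rintro ⟨a, ha⟩
    refine ⟨a, fun g => ?_⟩
    have h := congrArg SemidirectProduct.left (ha g)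
    rw [SectionsH1Aux.conj_eq] at h
    show (s'.1 g).left = (s.1 g).left * (a * ((φ g) a)⁻¹)
    rw [h, SectionsH1Aux.sec_right φ s g]
    simp [mul_comm, mul_left_comm, mul_assoc]
  · rintro ⟨a, ha⟩
    refine ⟨a, fun g => ?_⟩
    rw [SectionsH1Aux.conj_eq]
    ext
    · have h : (s'.1 g).left = (s.1 g).left * (a * ((φ g) a)⁻¹) := ha g
      show (s'.1 g).left = a * (s.1 g).left * ((φ (s.1 g).right) a)⁻¹
      rw [SectionsH1Aux.sec_right φ s g, h]
      simp [mul_comm, mul_left_comm, mul_assoc]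
    · simp [SectionsH1Aux.sec_right φ s g, SectionsH1Aux.sec_right φ s' g]
end

section
/- Let C be a category and F : C ⥤ Type u a functor. Then the commutative square in the category Cat of categories whose top arrow is the functor F.Elements ⥤ Pointed sending an object (c, x) to the pointed type (F(c), x) and a morphism g to the point-preserving map F(g), whose left vertical arrow is the canonical projection F.Elements ⥤ C, whose right vertical arrow is the forgetful functor Pointed ⥤ Type u, and whose bottom arrow is F regarded as a functor into the category of types, is a pullback square. (This is the statement that the forgetful functor from pointed objects is the universal fibration, i.e. that the universal left fibration is the forgetful map from pointed spaces to spaces, in the 1-categorical case.) -/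
open CategoryTheory

universe u

/-- For a functor `F : C ⥤ Type u`, the functor `F.Elements ⥤ Pointed` sending
`(c, x)` to the pointed type `(F c, x)` and a morphism `g` to the point-preserving
map `F.map g`. -/
@[simps]
def elementsToPointed {C : Type (u + 1)} [Category.{u} C] (F : C ⥤ Type u) :
    F.Elements ⥤ Pointed.{u} where
  obj p := ⟨F.obj p.1, p.2⟩
  map g := ⟨F.map g.1, g.2⟩

/-!
A functor `W ⥤ F.Elements` amounts to a functor `g : W ⥤ C` together with a point of
`F (g X)` for every `X`, preserved by the maps `F (g f)`; this is precisely a functor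
`W ⥤ Pointed` lying over `g ⋙ F`. Uniqueness holds because the projection `π F` and the
forgetful functor of `Pointed` are faithful, so functors into their sources are determined
by their objects and their composites with them.
-/

open Limits

universe v w

lemma CategoryTheory.Functor.ext_of_faithful {W D E : Type*} [Category W] [Category D]
    [Category E] (P : D ⥤ E) [P.Faithful] {G G' : W ⥤ D} (hobj : ∀ X, G.obj X = G'.obj X)
    (h : G ⋙ P = G' ⋙ P) : G = G' :=
  Functor.ext hobj fun _ _ f => P.map_injective <| by
    simpa [eqToHom_map] using Functor.congr_hom h f

lemma CategoryTheory.Functor.map_cast_of_eq {W : Type*} [Category W] {G G' : W ⥤ Type w}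
    (h : G = G') {X Y : W} (f : X ⟶ Y) (x : G.obj X) :
    G'.map f (cast (Functor.congr_obj h X) x) = cast (Functor.congr_obj h Y) (G.map f x) := by
  subst h; rfl

lemma Pointed.mk_cast_point {α : Type u} (p : Pointed.{u}) (e : p.X = α) :
    (⟨α, cast e p.point⟩ : Pointed.{u}) = p := by
  cases p; subst e; rfl

lemma CategoryTheory.Cat.isPullback_of_lift {P X Y Z : Type u} [Category.{v} P] [Category.{v} X]
    [Category.{v} Y] [Category.{v} Z] {top : P ⥤ X} {left : P ⥤ Y} {right : X ⥤ Z}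
    {bot : Y ⥤ Z} (comm : top ⋙ right = left ⋙ bot)
    (lift : ∀ {W : Type u} [Category.{v} W] (f : W ⥤ X) (g : W ⥤ Y), f ⋙ right = g ⋙ bot → W ⥤ P)
    (lift_top : ∀ {W : Type u} [Category.{v} W] (f : W ⥤ X) (g : W ⥤ Y)
      (h : f ⋙ right = g ⋙ bot), lift f g h ⋙ top = f)
    (lift_left : ∀ {W : Type u} [Category.{v} W] (f : W ⥤ X) (g : W ⥤ Y)
      (h : f ⋙ right = g ⋙ bot), lift f g h ⋙ left = g)
    (hom_ext : ∀ {W : Type u} [Category.{v} W] (m m' : W ⥤ P),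
      m ⋙ top = m' ⋙ top → m ⋙ left = m' ⋙ left → m = m') :
    IsPullback top.toCatHom left.toCatHom right.toCatHom bot.toCatHom := by
  refine IsPullback.of_isLimit' ⟨congrArg Functor.toCatHom comm⟩ <|
    PullbackCone.IsLimit.mk _
      (fun s =>
        (lift s.fst.toFunctor s.snd.toFunctor (congrArg Hom.toFunctor s.condition)).toCatHom)
      (fun s => Cat.ext (lift_top _ _ _)) (fun s => Cat.ext (lift_left _ _ _))
      (fun s m hfst hsnd => Cat.ext (hom_ext _ _ ?_ ?_))
  · exact (congrArg Hom.toFunctor hfst).trans (lift_top _ _ _).symm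
  · exact (congrArg Hom.toFunctor hsnd).trans (lift_left _ _ _).symm

namespace CategoryTheory.CategoryOfElements

section lift

variable {C : Type*} [Category C] {F : C ⥤ Type w} {W : Type*} [Category W]
  (fst : W ⥤ Pointed.{w}) (snd : W ⥤ C) (h : fst ⋙ forget Pointed = snd ⋙ F)

def liftOfPointed : W ⥤ F.Elements where
  obj X := ⟨snd.obj X, cast (Functor.congr_obj h X) (fst.obj X).point⟩
  map {X Y} f := ⟨snd.map f, by
    change (snd ⋙ F).map f _ = _
    rw [Functor.map_cast_of_eq h]
    exact congrArg _ (fst.map f).map_point⟩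
  map_id X := by ext; exact snd.map_id X
  map_comp f g := by ext; exact snd.map_comp f g

lemma liftOfPointed_comp_π : liftOfPointed fst snd h ⋙ π F = snd := rfl

end lift

variable {C : Type (u + 1)} [Category.{u} C] {F : C ⥤ Type u} {W : Type*} [Category W]

lemma liftOfPointed_comp_elementsToPointed (fst : W ⥤ Pointed.{u}) (snd : W ⥤ C)
    (h : fst ⋙ forget Pointed = snd ⋙ F) : liftOfPointed fst snd h ⋙ elementsToPointed F = fst :=
  Functor.ext_of_faithful (forget Pointed) (fun _ => Pointed.mk_cast_point _ _) h.symm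

lemma functor_ext {m m' : W ⥤ F.Elements}
    (hpt : m ⋙ elementsToPointed F = m' ⋙ elementsToPointed F) (hπ : m ⋙ π F = m' ⋙ π F) :
    m = m' :=
  Functor.ext_of_faithful (π F)
    (fun X => Sigma.ext (Functor.congr_obj hπ X)
      (congr_arg_heq Pointed.point (Functor.congr_obj hpt X)))
    hπ

end CategoryTheory.CategoryOfElements

/-- The square in `Cat` whose top arrow is `(c, x) ↦ (F c, x)`, whose left
vertical arrow is the projection `F.Elements ⥤ C`, whose right vertical arrow is
the forgetful functor `Pointed ⥤ Type u`, and whose bottom arrow is `F`, is a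
pullback square: the forgetful functor from pointed types is the universal left
fibration (in the 1-categorical case). -/
theorem elements_pointed_isPullback {C : Type (u + 1)} [Category.{u} C]
    (F : C ⥤ Type u) :
    IsPullback
      (P := Cat.of F.Elements) (X := Cat.of Pointed.{u}) (Y := Cat.of C)
      (Z := Cat.of (Type u))
      ((elementsToPointed F).toCatHom : Cat.of F.Elements ⟶ Cat.of Pointed.{u})
      ((CategoryOfElements.π F).toCatHom : Cat.of F.Elements ⟶ Cat.of C)
      ((forget Pointed.{u}).toCatHom : Cat.of Pointed.{u} ⟶ Cat.of (Type u))
      (F.toCatHom : Cat.of C ⟶ Cat.of (Type u)) :=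
  Cat.isPullback_of_lift rfl CategoryOfElements.liftOfPointed
    CategoryOfElements.liftOfPointed_comp_elementsToPointed
    CategoryOfElements.liftOfPointed_comp_π (fun _ _ => CategoryOfElements.functor_ext)
end
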